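/- arXiv:2202.12077 — 8 statements merged into one kernel-verified Lean document; each statement's English description precedes it below -/
import Mathlib

section
/- Let Γ be a finite group acting linearly on ℝ^n, acting on polynomials by (γ·p)(x) = p(γ⁻¹x). Let {e_{π,i,j}} be a symmetry adapted basis, i.e., γ·e_{π,i,j} = Σ_k π(γ)_{k,j} e_{π,i,k} where the matrices π(γ) are unitary. Then the matrix polynomial E_π(x) defined by E_π(x)_{i,i'} = (1/d_π) Σ_{j=1}^{d_π} e_{π,i,j}(x) · conj(e_{π,i',j}(x)) is Γ-invariant, i.e., E_π(γ⁻¹x) = E_π(x) for all γ ∈ Γ and x ∈ ℝ^n. -/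
open Matrix BigOperators

/-- If `{e_{i,j}}` is a symmetry adapted basis for a finite group `Γ` acting linearly on
`ℝ^n` (so that `e_{i,j}(γ⁻¹x) = Σ_k π(γ)_{k,j} e_{i,k}(x)` with `π(γ)` unitary), then the
matrix `E(x)_{i,i'} = (1/dπ) Σ_j e_{i,j}(x) conj(e_{i',j}(x))` is `Γ`-invariant:
`E(γ⁻¹x) = E(x)` for all `γ` and `x`. -/
theorem stmt_4 {Γ : Type*} [Group Γ] [Fintype Γ] {n dπ m : ℕ}
    (θ : Γ →* Matrix.GeneralLinearGroup (Fin n) ℝ)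
    (π : Γ →* Matrix.unitaryGroup (Fin dπ) ℂ)
    (e : Fin m → Fin dπ → ((Fin n → ℝ) → ℂ))
    (he : ∀ (γ : Γ) (i : Fin m) (j : Fin dπ) (x : Fin n → ℝ),
      e i j ((θ γ⁻¹ : Matrix (Fin n) (Fin n) ℝ).mulVec x) =
        ∑ k : Fin dπ, (π γ : Matrix (Fin dπ) (Fin dπ) ℂ) k j * e i k x) :
    ∀ (γ : Γ) (x : Fin n → ℝ) (i i' : Fin m),
      (dπ : ℂ)⁻¹ * ∑ j : Fin dπ,
          e i j ((θ γ⁻¹ : Matrix (Fin n) (Fin n) ℝ).mulVec x) *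
            star (e i' j ((θ γ⁻¹ : Matrix (Fin n) (Fin n) ℝ).mulVec x)) =
        (dπ : ℂ)⁻¹ * ∑ j : Fin dπ, e i j x * star (e i' j x) := by
  intro γ x i i'
  set A : Matrix (Fin dπ) (Fin dπ) ℂ := (π γ : Matrix (Fin dπ) (Fin dπ) ℂ) with hA
  have hu : A * star A = 1 := (π γ).prop.2
  congr 1
  calc ∑ j : Fin dπ, e i j ((θ γ⁻¹ : Matrix (Fin n) (Fin n) ℝ).mulVec x) *
          star (e i' j ((θ γ⁻¹ : Matrix (Fin n) (Fin n) ℝ).mulVec x))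
      = ∑ j : Fin dπ, ∑ k : Fin dπ, ∑ l : Fin dπ,
          (A k j * star (A l j)) * (e i k x * star (e i' l x)) := by
        refine Finset.sum_congr rfl fun j _ => ?_
        rw [he, he, star_sum, Finset.sum_mul_sum]
        refine Finset.sum_congr rfl fun k _ => Finset.sum_congr rfl fun l _ => ?_
        rw [star_mul']
        ring
    _ = ∑ k : Fin dπ, ∑ l : Fin dπ, (A * star A) k l * (e i k x * star (e i' l x)) := by
        rw [Finset.sum_comm]
        refine Finset.sum_congr rfl fun k _ => ?_
        rw [Finset.sum_comm]
        refine Finset.sum_congr rfl fun l _ => ?_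
        rw [Matrix.mul_apply, Finset.sum_mul]
        refine Finset.sum_congr rfl fun j _ => ?_
        simp [Matrix.star_apply]
    _ = ∑ j : Fin dπ, e i j x * star (e i' j x) := by
        simp [hu, Matrix.one_apply, Finset.sum_ite_eq, ite_mul]
end

section
/- Let Γ be a finite group acting linearly on ℝ^n. Suppose S ⊆ ℝ^n is a Γ-invariant, minimal unisolvent set for the space ℝ[x]_{≤2d} of polynomials of degree at most 2d. Then any set R of representatives for the Γ-orbits in S is minimal unisolvent for the space ℝ[x]^Γ_{≤2d} of Γ-invariant polynomials of degree at most 2d. -/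
open Matrix MvPolynomial BigOperators

noncomputable def evalLM {n : ℕ} (x : Fin n → ℝ) : MvPolynomial (Fin n) ℝ →ₗ[ℝ] ℝ where
  toFun p := MvPolynomial.eval x p
  map_add' := by simp
  map_smul' := by simp [MvPolynomial.smul_eval]

noncomputable def linSub {n : ℕ} (A : Matrix (Fin n) (Fin n) ℝ) :
    MvPolynomial (Fin n) ℝ →ₐ[ℝ] MvPolynomial (Fin n) ℝ :=
  MvPolynomial.aeval (fun i => ∑ j, MvPolynomial.C (A i j) * MvPolynomial.X j)

lemma eval_linSub {n : ℕ} (A : Matrix (Fin n) (Fin n) ℝ) (x : Fin n → ℝ)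
    (q : MvPolynomial (Fin n) ℝ) : eval x (linSub A q) = eval (A.mulVec x) q := by
  induction q using MvPolynomial.induction_on with
  | C a => simp [linSub]
  | add p q hp hq => simp [map_add, hp, hq]
  | mul_X p i hp =>
      rw [_root_.map_mul, _root_.map_mul, hp]
      simp [linSub, Matrix.mulVec, dotProduct]

lemma totalDegree_linSub_le {n : ℕ} (A : Matrix (Fin n) (Fin n) ℝ)
    (q : MvPolynomial (Fin n) ℝ) : (linSub A q).totalDegree ≤ q.totalDegree := by
  rw [linSub, aeval_def, eval₂_eq]
  refine (totalDegree_finset_sum _ _).trans (Finset.sup_le fun m hm => ?_)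
  refine (totalDegree_mul _ _).trans ?_
  have h1 : ∀ i : Fin n, (∑ j, MvPolynomial.C (A i j) * MvPolynomial.X j :
      MvPolynomial (Fin n) ℝ).totalDegree ≤ 1 := by
    intro i
    refine (totalDegree_finset_sum _ _).trans (Finset.sup_le fun j _ => ?_)
    refine (totalDegree_mul _ _).trans ?_
    simp [totalDegree_C, totalDegree_X]
  have h2 : (∏ i ∈ m.support, (∑ j, MvPolynomial.C (A i j) * MvPolynomial.X j :
      MvPolynomial (Fin n) ℝ) ^ m i).totalDegree ≤ m.sum fun _ e => e := by
    refine (totalDegree_finset_prod _ _).trans ?_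
    rw [Finsupp.sum]
    refine Finset.sum_le_sum fun i _ => ?_
    calc ((∑ j, MvPolynomial.C (A i j) * MvPolynomial.X j : MvPolynomial (Fin n) ℝ) ^ m i).totalDegree
        ≤ m i * (∑ j, MvPolynomial.C (A i j) * MvPolynomial.X j : MvPolynomial (Fin n) ℝ).totalDegree :=
          totalDegree_pow _ _
      _ ≤ m i * 1 := Nat.mul_le_mul_left _ (h1 i)
      _ = m i := Nat.mul_one _
  calc (algebraMap ℝ (MvPolynomial (Fin n) ℝ) (q.coeff m)).totalDegree +
        (∏ i ∈ m.support, (∑ j, MvPolynomial.C (A i j) * MvPolynomial.X j :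
          MvPolynomial (Fin n) ℝ) ^ m i).totalDegree
      ≤ 0 + (m.sum fun _ e => e) := by
        refine Nat.add_le_add ?_ h2
        simp [MvPolynomial.algebraMap_eq, totalDegree_C]
    _ ≤ q.totalDegree := by simpa using le_totalDegree hm


/-- The submodule of `Γ`-invariant polynomials of total degree at most `k`, for a finite
group `Γ` acting linearly on `ℝ^n` via `θ` (acting on polynomials by
`(γ·p)(x) = p(γ⁻¹x)`). -/
noncomputable def invariantRestrict {Γ : Type*} [Group Γ] {n : ℕ}
    (θ : Γ →* Matrix.GeneralLinearGroup (Fin n) ℝ) (k : ℕ) :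
    Submodule ℝ (MvPolynomial (Fin n) ℝ) where
  carrier := {p | p.totalDegree ≤ k ∧
    ∀ (γ : Γ) (x : Fin n → ℝ),
      MvPolynomial.eval ((θ γ : Matrix (Fin n) (Fin n) ℝ).mulVec x) p = MvPolynomial.eval x p}
  add_mem' := by
    rintro a b ⟨ha1, ha2⟩ ⟨hb1, hb2⟩
    refine ⟨le_trans (MvPolynomial.totalDegree_add a b) (max_le ha1 hb1), ?_⟩
    intro γ x
    simp [ha2 γ x, hb2 γ x]
  zero_mem' := by
    refine ⟨by simp, by simp⟩
  smul_mem' := by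
    rintro c a ⟨ha1, ha2⟩
    refine ⟨le_trans (MvPolynomial.totalDegree_smul_le c a) ha1, ?_⟩
    intro γ x
    simp [MvPolynomial.smul_eq_C_mul, ha2 γ x]

/-- If `S` is a `Γ`-invariant minimal unisolvent set for the polynomials of degree at
most `2d`, then any set `R` of representatives for the `Γ`-orbits in `S` is minimal
unisolvent for the `Γ`-invariant polynomials of degree at most `2d`. -/
theorem stmt_6 {Γ : Type*} [Group Γ] [Fintype Γ] {n d : ℕ}
    (θ : Γ →* Matrix.GeneralLinearGroup (Fin n) ℝ)
    (S : Finset (Fin n → ℝ))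
    -- `S` is `Γ`-invariant
    (hSinv : ∀ (γ : Γ), ∀ x ∈ S, (θ γ : Matrix (Fin n) (Fin n) ℝ).mulVec x ∈ S)
    -- `S` is unisolvent for `ℝ[x]_{≤2d}`
    (hSuni : ∀ p : MvPolynomial (Fin n) ℝ, p.totalDegree ≤ 2 * d →
      (∀ x ∈ S, MvPolynomial.eval x p = 0) → p = 0)
    -- `S` is minimal: `|S| = dim ℝ[x]_{≤2d}`
    (hScard : S.card = Module.finrank ℝ (MvPolynomial.restrictTotalDegree (Fin n) ℝ (2 * d)))
    -- `R` is a set of representatives for the orbits in `S`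
    (R : Finset (Fin n → ℝ)) (hRS : R ⊆ S)
    (hrep : ∀ x ∈ S, ∃! r, r ∈ R ∧ ∃ γ : Γ, x = (θ γ : Matrix (Fin n) (Fin n) ℝ).mulVec r) :
    (∀ p ∈ invariantRestrict θ (2 * d),
      (∀ r ∈ R, MvPolynomial.eval r p = 0) → p = 0) ∧
    R.card = Module.finrank ℝ (invariantRestrict θ (2 * d)) := by
  classical
  have h1 : ∀ p ∈ invariantRestrict θ (2 * d),
      (∀ r ∈ R, MvPolynomial.eval r p = 0) → p = 0 := by
    rintro p ⟨hdeg, hinv⟩ hR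
    refine hSuni p hdeg fun x hx => ?_
    obtain ⟨r, ⟨hrR, γ, hx'⟩, -⟩ := hrep x hx
    rw [hx', hinv γ r, hR r hrR]
  refine ⟨h1, ?_⟩
  have hmulVec_comp : ∀ (γ δ : Γ) (x : Fin n → ℝ),
      (θ γ : Matrix (Fin n) (Fin n) ℝ).mulVec ((θ δ : Matrix (Fin n) (Fin n) ℝ).mulVec x)
        = (θ (γ * δ) : Matrix (Fin n) (Fin n) ℝ).mulVec x := by
    intro γ δ x
    rw [Matrix.mulVec_mulVec, ← Units.val_mul, ← _root_.map_mul]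
  -- the evaluation map on `S` for `restrictTotalDegree` is bijective
  set V := MvPolynomial.restrictTotalDegree (Fin n) ℝ (2 * d) with hV
  let ES : V →ₗ[ℝ] (↥S → ℝ) :=
    LinearMap.pi fun s => (evalLM (s : Fin n → ℝ)).comp V.subtype
  have hESinj : Function.Injective ES := by
    refine LinearMap.ker_eq_bot.mp (LinearMap.ker_eq_bot'.mpr fun p hp => ?_)
    refine Subtype.ext (hSuni p ((MvPolynomial.mem_restrictTotalDegree _ _ _).mp p.2)
      fun x hx => ?_)
    have := congrFun hp ⟨x, hx⟩
    simpa [ES, evalLM] using this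
  have hfr : Module.finrank ℝ V = Module.finrank ℝ (↥S → ℝ) := by
    rw [Module.finrank_fintype_fun_eq_card, Fintype.card_coe]
    exact hScard.symm
  have hESsurj : Function.Surjective ES :=
    (LinearMap.injective_iff_surjective_of_finrank_eq_finrank hfr).mp hESinj
  -- construction of invariant delta functions on `R`
  have hdelta : ∀ r0 ∈ R, ∃ p ∈ invariantRestrict θ (2 * d),
      ∀ r ∈ R, MvPolynomial.eval r p = if r = r0 then 1 else 0 := by
    intro r0 hr0
    obtain ⟨q, hq⟩ := hESsurj (fun s => if (s : Fin n → ℝ) = r0 then 1 else 0)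
    have hqval : ∀ x ∈ S, MvPolynomial.eval x (q : MvPolynomial (Fin n) ℝ) =
        if x = r0 then 1 else 0 := by
      intro x hx
      have := congrFun hq ⟨x, hx⟩
      simpa [ES, evalLM] using this
    have hqdeg : (q : MvPolynomial (Fin n) ℝ).totalDegree ≤ 2 * d :=
      (MvPolynomial.mem_restrictTotalDegree _ _ _).mp q.2
    set p0 : MvPolynomial (Fin n) ℝ :=
      ∑ γ : Γ, linSub ((θ γ⁻¹ : Matrix (Fin n) (Fin n) ℝ)) (q : MvPolynomial (Fin n) ℝ)
      with hp0
    have hp0eval : ∀ x : Fin n → ℝ, MvPolynomial.eval x p0 =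
        ∑ γ : Γ, MvPolynomial.eval ((θ γ⁻¹ : Matrix (Fin n) (Fin n) ℝ).mulVec x)
          (q : MvPolynomial (Fin n) ℝ) := by
      intro x
      rw [hp0, map_sum]
      exact Finset.sum_congr rfl fun γ _ => eval_linSub _ _ _
    have hp0deg : p0.totalDegree ≤ 2 * d := by
      rw [hp0]
      exact (totalDegree_finset_sum _ _).trans (Finset.sup_le fun γ _ =>
        (totalDegree_linSub_le _ _).trans hqdeg)
    have hp0inv : ∀ (δ : Γ) (x : Fin n → ℝ),
        MvPolynomial.eval ((θ δ : Matrix (Fin n) (Fin n) ℝ).mulVec x) p0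
          = MvPolynomial.eval x p0 := by
      intro δ x
      rw [hp0eval, hp0eval]
      refine (Fintype.sum_equiv (Equiv.mulLeft δ) _ _ fun γ => ?_).symm
      simp only [Equiv.coe_mulLeft]
      rw [hmulVec_comp]
      have : (δ * γ)⁻¹ * δ = γ⁻¹ := by group
      rw [this]
    have hval : ∀ r ∈ R, MvPolynomial.eval r p0 =
        ∑ γ : Γ, (if (θ γ⁻¹ : Matrix (Fin n) (Fin n) ℝ).mulVec r = r0 then (1:ℝ) else 0) := by
      intro r hr
      rw [hp0eval]
      exact Finset.sum_congr rfl fun γ _ => hqval _ (hSinv γ⁻¹ r (hRS hr))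
    have hvalne : ∀ r ∈ R, r ≠ r0 → MvPolynomial.eval r p0 = 0 := by
      intro r hr hne
      rw [hval r hr]
      refine Finset.sum_eq_zero fun γ _ => ?_
      rw [if_neg]
      intro h
      have hr' : r = (θ γ : Matrix (Fin n) (Fin n) ℝ).mulVec r0 := by
        rw [← h, hmulVec_comp, mul_inv_cancel, _root_.map_one, Units.val_one, Matrix.one_mulVec]
      obtain ⟨rr, -, hu⟩ := hrep r (hRS hr)
      have e1 : r0 = rr := hu r0 ⟨hr0, γ, hr'⟩
      have e2 : r = rr := hu r ⟨hr, 1, by rw [_root_.map_one, Units.val_one, Matrix.one_mulVec]⟩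
      exact hne (e2.trans e1.symm)
    have hvalr0 : MvPolynomial.eval r0 p0 ≠ 0 := by
      rw [hval r0 hr0]
      have hpos : (0:ℝ) < ∑ γ : Γ,
          (if (θ γ⁻¹ : Matrix (Fin n) (Fin n) ℝ).mulVec r0 = r0 then (1:ℝ) else 0) := by
        refine Finset.sum_pos' (fun γ _ => by split <;> norm_num)
          ⟨1, Finset.mem_univ 1, ?_⟩
        rw [if_pos (by rw [inv_one, _root_.map_one, Units.val_one, Matrix.one_mulVec])]
        norm_num
      exact hpos.ne'
    refine ⟨(MvPolynomial.eval r0 p0)⁻¹ • p0,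
      Submodule.smul_mem _ _ ⟨hp0deg, hp0inv⟩, ?_⟩
    intro r hr
    rw [MvPolynomial.smul_eval]
    by_cases h : r = r0
    · subst h
      rw [if_pos rfl, inv_mul_cancel₀ hvalr0]
    · rw [if_neg h, hvalne r hr h, mul_zero]
  -- the evaluation map on `R` for the invariants is bijective
  let E : invariantRestrict θ (2 * d) →ₗ[ℝ] (↥R → ℝ) :=
    LinearMap.pi fun r => (evalLM (r : Fin n → ℝ)).comp (invariantRestrict θ (2 * d)).subtype
  have hEinj : Function.Injective E := by
    refine LinearMap.ker_eq_bot.mp (LinearMap.ker_eq_bot'.mpr fun p hp => ?_)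
    refine Subtype.ext (h1 p p.2 fun r hr => ?_)
    have := congrFun hp ⟨r, hr⟩
    simpa [E, evalLM] using this
  have hEsurj : Function.Surjective E := by
    intro f
    choose p hmem hpval using fun r : ↥R => hdelta r r.2
    refine ⟨∑ r : ↥R, f r • ⟨p r, hmem r⟩, ?_⟩
    funext r
    rw [map_sum, Finset.sum_apply]
    have hterm : ∀ r' : ↥R,
        E (f r' • (⟨p r', hmem r'⟩ : invariantRestrict θ (2 * d))) r
          = if r = r' then f r' else 0 := by
      intro r'
      rw [_root_.map_smul]
      have : E (⟨p r', hmem r'⟩ : invariantRestrict θ (2 * d)) r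
          = MvPolynomial.eval (r : Fin n → ℝ) (p r') := rfl
      simp only [Pi.smul_apply, this, hpval r' r r.2, smul_eq_mul]
      by_cases h : r = r'
      · rw [if_pos (by rw [h]), if_pos h, mul_one]
      · rw [if_neg (fun hc => h (Subtype.ext hc)), if_neg h, mul_zero]
    rw [Finset.sum_congr rfl fun r' _ => hterm r']
    simp
  have hfre := LinearEquiv.finrank_eq (LinearEquiv.ofBijective E ⟨hEinj, hEsurj⟩)
  rw [hfre, Module.finrank_fintype_fun_eq_card, Fintype.card_coe]
end

section
/- Let S_{n+1} act on ℝ^n by permuting n+1 affinely independent vectors v_1, …, v_{n+1} (i.e., permuting barycentric coordinates with respect to these vectors). Then for each d ≥ 1, the set S of points x whose barycentric coordinates α_1^x, …, α_{n+1}^x (with Σ_i α_i^x = 1 and x = Σ_i α_i^x v_i) all lie in {k/d : k = 0, …, d} is an S_{n+1}-invariant, minimal unisolvent set for ℝ[x]_{≤d}. -/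
/-!
A grid point is `∑ᵢ (kᵢ / d) • vᵢ` for a multi-index `k : Fin (n + 1) → ℕ` with `∑ kᵢ = d`;
barycentric coordinates identify grid points with such multi-indices, and a slack variable
identifies those with the monomials of degree `≤ d` in `n` variables, so the grid has
`dim ℝ[x]_{≤d}` points. For each `k`, the product of the `d` affine factors `d λᵢ - j`
(`j < kᵢ`, `λᵢ` the barycentric coordinates) is a polynomial of degree `d` that is nonzero at
the grid point `k` and vanishes at every other grid point `m`, since then `mᵢ < kᵢ` for some
`i`. Hence evaluation on the grid maps `ℝ[x]_{≤d}` onto all functions on the grid, and by the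
dimension count it is injective.
-/

open Matrix MvPolynomial BigOperators

open Finset

namespace MvPolynomial

variable {σ : Type*} [Fintype σ] [DecidableEq σ]

noncomputable def ofAffineMap (f : (σ → ℝ) →ᵃ[ℝ] ℝ) : MvPolynomial σ ℝ :=
  C (f 0) + ∑ j, C (f.linear (Pi.single j 1)) * X j

@[simp]
lemma eval_ofAffineMap (f : (σ → ℝ) →ᵃ[ℝ] ℝ) (x : σ → ℝ) : eval x (ofAffineMap f) = f x := by
  have hsingle (j : σ) : Pi.single j (x j) = x j • Pi.single j (1 : ℝ) := by
    rw [← Pi.single_smul', smul_eq_mul, mul_one]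
  have hlin : f.linear x = ∑ j, f.linear (Pi.single j 1) * x j := by
    conv_lhs => rw [← univ_sum_single x]
    simp only [map_sum, hsingle, map_smul, smul_eq_mul, mul_comm]
  rw [f.decomp, Pi.add_apply, hlin, add_comm]
  simp [ofAffineMap]

lemma totalDegree_ofAffineMap_le (f : (σ → ℝ) →ᵃ[ℝ] ℝ) : (ofAffineMap f).totalDegree ≤ 1 := by
  refine (totalDegree_add _ _).trans (max_le (by simp) ?_)
  refine (totalDegree_finsetSum _ _).trans (Finset.sup_le fun j _ => ?_)
  exact (totalDegree_mul _ _).trans (by simp [totalDegree_X])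

end MvPolynomial

section BarycentricGrid

variable {ι V : Type*} [Fintype ι] [AddCommGroup V] [Module ℝ V]

def barycentricGrid (d : ℕ) (v : ι → V) : Set V :=
  {x | ∃ α : ι → ℝ, ∑ i, α i = 1 ∧ x = ∑ i, α i • v i ∧ ∀ i, ∃ k : ℕ, k ≤ d ∧ α i = (k : ℝ) / d}

noncomputable def gridPoint (d : ℕ) (v : ι → V) (k : ι → ℕ) : V :=
  ∑ i, ((k i : ℝ) / d) • v i

variable (B : AffineBasis ι ℝ V) {d : ℕ}

lemma AffineBasis.coord_sum_smul {α : ι → ℝ} (hα : ∑ i, α i = 1) (i : ι) :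
    B.coord i (∑ j, α j • B j) = α i := by
  rw [← affineCombination_eq_linear_combination _ _ _ hα]
  exact B.coord_apply_combination_of_mem (mem_univ i) hα

lemma mem_barycentricGrid_iff {x : V} :
    x ∈ barycentricGrid d B ↔ ∀ i, ∃ k : ℕ, k ≤ d ∧ B.coord i x = (k : ℝ) / d := by
  constructor
  · rintro ⟨α, hα, rfl, hgrid⟩ i
    simpa only [B.coord_sum_smul hα] using hgrid i
  · exact fun h => ⟨fun i => B.coord i x, B.sum_coord_apply_eq_one x,
      (B.linear_combination_coord_eq_self x).symm, h⟩

lemma sum_cast_div_eq_one (hd : 0 < d) {k : ι → ℕ} (hk : ∑ i, k i = d) :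
    ∑ i, (k i : ℝ) / d = 1 := by
  rw [← sum_div, ← Nat.cast_sum, hk, div_self (by positivity)]

lemma coord_gridPoint (hd : 0 < d) {k : ι → ℕ} (hk : ∑ i, k i = d) (i : ι) :
    B.coord i (gridPoint d B k) = (k i : ℝ) / d :=
  B.coord_sum_smul (sum_cast_div_eq_one hd hk) i

lemma injOn_gridPoint [DecidableEq ι] (hd : 0 < d) :
    Set.InjOn (gridPoint d B) ↑(piAntidiag (univ : Finset ι) d) := by
  intro k hk m hm h
  funext i
  have hi := coord_gridPoint B hd (mem_piAntidiag.1 hk).1 i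
  rw [h, coord_gridPoint B hd (mem_piAntidiag.1 hm).1, div_left_inj' (by positivity)] at hi
  exact_mod_cast hi.symm

lemma barycentricGrid_eq_image_gridPoint [DecidableEq ι] (hd : 0 < d) :
    barycentricGrid d B = gridPoint d B '' ↑(piAntidiag (univ : Finset ι) d) := by
  ext x
  rw [mem_barycentricGrid_iff]
  constructor
  · intro h
    choose k hkd hk using h
    have hsum : ∑ i, k i = d := by
      have := B.sum_coord_apply_eq_one x
      simp only [hk, ← sum_div, div_eq_one_iff_eq (by positivity : (d : ℝ) ≠ 0)] at this
      exact_mod_cast this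
    refine ⟨k, by simpa using hsum, ?_⟩
    simp only [gridPoint, ← hk, B.linear_combination_coord_eq_self]
  · rintro ⟨k, hk, rfl⟩ i
    have hsum : ∑ i, k i = d := by simpa using hk
    exact ⟨k i, hsum ▸ single_le_sum (fun _ _ => Nat.zero_le _) (mem_univ i),
      coord_gridPoint B hd hsum i⟩

lemma sum_smul_comp_perm_mem_barycentricGrid (σ : Equiv.Perm ι) {α : ι → ℝ}
    (hα : ∑ i, α i = 1) (h : ∑ i, α i • B i ∈ barycentricGrid d B) :
    ∑ i, α i • B (σ i) ∈ barycentricGrid d B := by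
  have hασ : ∑ i, α (σ.symm i) = 1 := by rwa [Equiv.sum_comp σ.symm α]
  have hperm : ∑ i, α i • B (σ i) = ∑ i, α (σ.symm i) • B i := by
    rw [← Equiv.sum_comp σ (fun i => α (σ.symm i) • B i)]
    simp
  rw [mem_barycentricGrid_iff] at h ⊢
  intro i
  simpa only [hperm, B.coord_sum_smul hα, B.coord_sum_smul hασ] using h (σ.symm i)

end BarycentricGrid

section Lagrange

variable {ι σ : Type*} [Fintype ι] [Fintype σ] [DecidableEq σ] (d : ℕ)
  (B : AffineBasis ι ℝ (σ → ℝ))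

noncomputable def gridLagrange (k : ι → ℕ) : MvPolynomial σ ℝ :=
  ∏ i, ∏ j ∈ range (k i), (C (d : ℝ) * ofAffineMap (B.coord i) - C (j : ℝ))

lemma totalDegree_gridLagrange_le (k : ι → ℕ) : (gridLagrange d B k).totalDegree ≤ ∑ i, k i := by
  refine (totalDegree_finsetProd _ _).trans (sum_le_sum fun i _ => ?_)
  refine (totalDegree_finsetProd _ _).trans ?_
  refine (sum_le_card_nsmul (range (k i)) _ 1 fun j _ => ?_).trans (by simp)
  exact (totalDegree_sub _ _).trans <| max_le
    ((totalDegree_mul _ _).trans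
      (by rw [totalDegree_C, zero_add]; exact totalDegree_ofAffineMap_le _))
    (by rw [totalDegree_C]; exact Nat.zero_le 1)

variable {d}

lemma eval_gridPoint_gridLagrange (hd : 0 < d) (k : ι → ℕ) {m : ι → ℕ} (hm : ∑ i, m i = d) :
    eval (gridPoint d B m) (gridLagrange d B k) = ∏ i, ∏ j ∈ range (k i), ((m i : ℝ) - j) := by
  simp only [gridLagrange, map_prod, map_sub, map_mul, eval_C, eval_ofAffineMap,
    coord_gridPoint B hd hm, mul_div_cancel₀ _ (show (d : ℝ) ≠ 0 by positivity)]

lemma eval_gridPoint_gridLagrange_self_ne_zero (hd : 0 < d) {k : ι → ℕ} (hk : ∑ i, k i = d) :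
    eval (gridPoint d B k) (gridLagrange d B k) ≠ 0 := by
  rw [eval_gridPoint_gridLagrange B hd k hk]
  refine prod_ne_zero_iff.2 fun i _ => prod_ne_zero_iff.2 fun j hj => sub_ne_zero.2 ?_
  exact_mod_cast (mem_range.1 hj).ne'

lemma eval_gridPoint_gridLagrange_of_ne (hd : 0 < d) {k m : ι → ℕ} (hk : ∑ i, k i = d)
    (hm : ∑ i, m i = d) (hne : m ≠ k) : eval (gridPoint d B m) (gridLagrange d B k) = 0 := by
  rw [eval_gridPoint_gridLagrange B hd k hm]
  obtain ⟨i, hi⟩ : ∃ i, m i < k i := by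
    by_contra! h
    exact hne (funext fun i =>
      ((sum_eq_sum_iff_of_le fun i _ => h i).1 (hk.trans hm.symm) i (mem_univ i)).symm)
  exact prod_eq_zero (mem_univ i) (prod_eq_zero (mem_range.2 hi) (by simp))

end Lagrange

section GridEval

variable {ι σ : Type*} [Fintype ι] [DecidableEq ι] (B : AffineBasis ι ℝ (σ → ℝ))

noncomputable def gridEval (d : ℕ) :
    restrictTotalDegree σ ℝ d →ₗ[ℝ] (piAntidiag (univ : Finset ι) d → ℝ) :=
  LinearMap.pi fun k =>
    (aeval (gridPoint d B k.1)).toLinearMap ∘ₗ (restrictTotalDegree σ ℝ d).subtype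

variable {d : ℕ}

lemma gridEval_apply (p : restrictTotalDegree σ ℝ d) (k : piAntidiag (univ : Finset ι) d) :
    gridEval B d p k = eval (gridPoint d B k.1) p.1 := by
  simp [gridEval]

lemma surjective_gridEval [Fintype σ] [DecidableEq σ] (hd : 0 < d) :
    Function.Surjective (gridEval (σ := σ) B d) := by
  intro g
  have hmem (k : piAntidiag (univ : Finset ι) d) :
      gridLagrange d B k.1 ∈ restrictTotalDegree σ ℝ d :=
    (mem_restrictTotalDegree _ _ _).2
      ((totalDegree_gridLagrange_le d B k.1).trans_eq (mem_piAntidiag.1 k.2).1)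
  let c (k : piAntidiag (univ : Finset ι) d) := eval (gridPoint d B k.1) (gridLagrange d B k.1)
  refine ⟨∑ k, (g k / c k) • ⟨_, hmem k⟩, funext fun m => ?_⟩
  rw [map_sum, Finset.sum_apply, sum_eq_single m (fun k _ hkm => ?_) (by simp)]
  · rw [map_smul, Pi.smul_apply, gridEval_apply, smul_eq_mul,
      div_mul_cancel₀ _ (eval_gridPoint_gridLagrange_self_ne_zero B hd (mem_piAntidiag.1 m.2).1)]
  · rw [map_smul, Pi.smul_apply, gridEval_apply, smul_eq_mul,
      eval_gridPoint_gridLagrange_of_ne B hd (mem_piAntidiag.1 k.2).1 (mem_piAntidiag.1 m.2).1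
        (fun h => hkm (Subtype.ext h.symm)), mul_zero]

end GridEval

def sumLeEquivSumEq (n d : ℕ) :
    {f : Fin n → ℕ // ∑ i, f i ≤ d} ≃ {k : Fin (n + 1) → ℕ // ∑ i, k i = d} where
  toFun f := ⟨Fin.cons (d - ∑ i, f.1 i) f.1, by rw [Fin.sum_cons]; have := f.2; omega⟩
  invFun k := ⟨Fin.tail k.1, by
    have := k.2
    rw [Fin.sum_univ_succ] at this
    simp only [Fin.tail]
    omega⟩
  left_inv f := rfl
  right_inv k := by
    ext i
    refine Fin.cases ?_ (fun j => rfl) i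
    have := k.2
    rw [Fin.sum_univ_succ] at this
    simp only [Fin.cons_zero, Fin.tail]
    omega

lemma finrank_restrictTotalDegree_eq_card_piAntidiag (n d : ℕ) :
    Module.finrank ℝ (restrictTotalDegree (Fin n) ℝ d)
      = #(piAntidiag (univ : Finset (Fin (n + 1))) d) := by
  let e : {f : Fin n →₀ ℕ // f ∈ {f : Fin n →₀ ℕ | (f.sum fun _ e => e) ≤ d}}
      ≃ piAntidiag (univ : Finset (Fin (n + 1))) d :=
    (Finsupp.equivFunOnFinite.subtypeEquiv fun f => by
        simp [Finsupp.sum_fintype]).trans <|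
      (sumLeEquivSumEq n d).trans (Equiv.subtypeEquivRight fun k => by simp)
  exact (Module.finrank_eq_card_basis ((basisRestrictSupport ℝ _).reindex e)).trans
    (Fintype.card_coe _)

lemma eq_zero_of_forall_eval_gridPoint_eq_zero {n d : ℕ}
    (B : AffineBasis (Fin (n + 1)) ℝ (Fin n → ℝ)) (hd : 0 < d) {p : MvPolynomial (Fin n) ℝ}
    (hp : p.totalDegree ≤ d) (h : ∀ k ∈ piAntidiag univ d, eval (gridPoint d B k) p = 0) :
    p = 0 := by
  have hdim : Module.finrank ℝ (restrictTotalDegree (Fin n) ℝ d)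
      = Module.finrank ℝ (piAntidiag (univ : Finset (Fin (n + 1))) d → ℝ) := by
    rw [finrank_restrictTotalDegree_eq_card_piAntidiag, Module.finrank_fintype_fun_eq_card,
      Fintype.card_coe]
  have hinj : Function.Injective (gridEval B d) :=
    (LinearMap.injective_iff_surjective_of_finrank_eq_finrank hdim).2 (surjective_gridEval B hd)
  have hzero : gridEval B d ⟨p, (mem_restrictTotalDegree _ _ _).2 hp⟩ = gridEval B d 0 :=
    funext fun k => by rw [map_zero, gridEval_apply, h k k.2, Pi.zero_apply]
  exact congrArg Subtype.val (hinj hzero)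

/-- Let `S_{n+1}` act on `ℝ^n` by permuting `n+1` affinely independent vectors
`v_1, …, v_{n+1}` (i.e. permuting barycentric coordinates). For `d ≥ 1`, the set `S` of
points whose barycentric coordinates all lie in `{k/d : k = 0, …, d}` is an
`S_{n+1}`-invariant, minimal unisolvent set for the polynomials of degree at most `d`. -/
theorem stmt_8 {n d : ℕ} (hd : 1 ≤ d)
    (v : Fin (n + 1) → (Fin n → ℝ)) (hv : AffineIndependent ℝ v) :
    let S : Set (Fin n → ℝ) := {x | ∃ α : Fin (n + 1) → ℝ,
      (∑ i, α i) = 1 ∧ x = ∑ i, α i • v i ∧ ∀ i, ∃ k : ℕ, k ≤ d ∧ α i = (k : ℝ) / d}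
    -- `S` is invariant under permuting the barycentric coordinates
    (∀ (σ : Equiv.Perm (Fin (n + 1))) (α : Fin (n + 1) → ℝ), (∑ i, α i) = 1 →
      (∑ i, α i • v i) ∈ S → (∑ i, α i • v (σ i)) ∈ S) ∧
    -- `S` is minimal: it is finite of cardinality `dim ℝ[x]_{≤d}`
    S.Finite ∧
    S.ncard = Module.finrank ℝ (MvPolynomial.restrictTotalDegree (Fin n) ℝ d) ∧
    -- `S` is unisolvent for `ℝ[x]_{≤d}`
    (∀ p : MvPolynomial (Fin n) ℝ, p.totalDegree ≤ d →
      (∀ x ∈ S, MvPolynomial.eval x p = 0) → p = 0) := by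
  intro S
  let B : AffineBasis (Fin (n + 1)) ℝ (Fin n → ℝ) :=
    ⟨v, hv, hv.affineSpan_eq_top_iff_card_eq_finrank_add_one.2 (by simp)⟩
  have hS : S = gridPoint d B '' ↑(piAntidiag (univ : Finset (Fin (n + 1))) d) :=
    barycentricGrid_eq_image_gridPoint B hd
  refine ⟨fun σ α hα => sum_smul_comp_perm_mem_barycentricGrid B σ hα, ?_, ?_, ?_⟩
  · rw [hS]
    exact (piAntidiag univ d).finite_toSet.image _
  · rw [hS, (injOn_gridPoint B hd).ncard_image, Set.ncard_coe_finset,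
      finrank_restrictTotalDegree_eq_card_piAntidiag]
  · exact fun p hp hvan => eq_zero_of_forall_eval_gridPoint_eq_zero B hd hp
      fun k hk => hvan _ (hS ▸ ⟨k, hk, rfl⟩)
end

section
/- Let Γ be a finite group acting linearly on ℝ^n and let g ∈ ℝ[x]. For k = 1, …, |Γ| define the invariant polynomials g_k(x) = Σ_{Γ' ⊆ Γ, |Γ'| = k} ∏_{γ ∈ Γ'} (γ·g)(x), where (γ·g)(x) = g(γ⁻¹x). Then {x : (γ·g)(x) ≥ 0 for all γ ∈ Γ} = {x : g_k(x) ≥ 0 for k = 1, …, |Γ|}. -/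
open Matrix MvPolynomial BigOperators

lemma aux_esymm_nonneg {Γ : Type*} [Fintype Γ] [DecidableEq Γ] (a : Γ → ℝ)
    (h : ∀ k ∈ Finset.Icc 1 (Fintype.card Γ),
      0 ≤ ∑ Γ' ∈ Finset.univ.powersetCard k, ∏ γ ∈ Γ', a γ) :
    ∀ γ, 0 ≤ a γ := by
  by_contra hc
  push_neg at hc
  obtain ⟨γ₀, hγ₀⟩ := hc
  set t : ℝ := -a γ₀ with ht_def
  have ht : 0 < t := by simp [ht_def]; linarith
  set N := Fintype.card Γ with hN
  have hprod0 : ∏ γ : Γ, (a γ + t) = 0 :=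
    Finset.prod_eq_zero (Finset.mem_univ γ₀) (by simp [ht_def])
  have hexp : ∏ γ : Γ, (a γ + t) =
      ∑ k ∈ Finset.range (N + 1),
        ∑ Γ' ∈ Finset.univ.powersetCard k, (∏ γ ∈ Γ', a γ) * t ^ (N - k) := by
    rw [Finset.prod_add]
    rw [Finset.sum_powerset]
    refine Finset.sum_congr (by simp [hN]) fun k hk => ?_
    refine Finset.sum_congr rfl fun Γ' hΓ' => ?_
    rw [Finset.mem_powersetCard] at hΓ'
    rw [Finset.prod_const, Finset.card_sdiff_of_subset hΓ'.1, hΓ'.2]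
    simp [hN]
  have hpos : 0 < ∑ k ∈ Finset.range (N + 1),
      ∑ Γ' ∈ Finset.univ.powersetCard k, (∏ γ ∈ Γ', a γ) * t ^ (N - k) := by
    have hsplit : Finset.range (N + 1) = insert 0 (Finset.Icc 1 N) := by
      ext m; simp [Finset.mem_range, Nat.lt_succ_iff, Nat.one_le_iff_ne_zero]
      omega
    rw [hsplit, Finset.sum_insert (by simp)]
    have h0 : ∑ Γ' ∈ Finset.univ.powersetCard 0, (∏ γ ∈ Γ', a γ) * t ^ (N - 0)
        = t ^ N := by
      simp [Finset.powersetCard_zero]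
    rw [h0]
    have hrest : 0 ≤ ∑ k ∈ Finset.Icc 1 N,
        ∑ Γ' ∈ Finset.univ.powersetCard k, (∏ γ ∈ Γ', a γ) * t ^ (N - k) := by
      refine Finset.sum_nonneg fun k hk => ?_
      rw [← Finset.sum_mul]
      exact mul_nonneg (h k hk) (pow_nonneg ht.le _)
    have : 0 < t ^ N := pow_pos ht N
    linarith
  rw [← hexp, hprod0] at hpos
  exact lt_irrefl 0 hpos

/-- Let a finite group `Γ` act linearly on `ℝ^n` via `θ`, acting on a polynomial `g` by
`(γ·g)(x) = g(γ⁻¹x)`, and let `g_k` be the `k`-th elementary symmetric polynomial of the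
family `{γ·g : γ ∈ Γ}`. Then
`{x : (γ·g)(x) ≥ 0 for all γ} = {x : g_k(x) ≥ 0 for k = 1, …, |Γ|}`. -/
theorem stmt_10 {Γ : Type*} [Group Γ] [Fintype Γ] [DecidableEq Γ] {n : ℕ}
    (θ : Γ →* Matrix.GeneralLinearGroup (Fin n) ℝ)
    (g : MvPolynomial (Fin n) ℝ) :
    {x : Fin n → ℝ | ∀ γ : Γ,
        0 ≤ MvPolynomial.eval ((↑(θ γ)⁻¹ : Matrix (Fin n) (Fin n) ℝ).mulVec x) g} =
      {x : Fin n → ℝ | ∀ k ∈ Finset.Icc 1 (Fintype.card Γ),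
        0 ≤ ∑ Γ' ∈ Finset.univ.powersetCard k, ∏ γ ∈ Γ',
          MvPolynomial.eval ((↑(θ γ)⁻¹ : Matrix (Fin n) (Fin n) ℝ).mulVec x) g} := by
  ext x
  simp only [Set.mem_setOf_eq]
  constructor
  · intro h k _
    exact Finset.sum_nonneg fun Γ' _ => Finset.prod_nonneg fun γ _ => h γ
  · intro h
    exact aux_esymm_nonneg _ h
end

section
/- Let a_1, …, a_N be real numbers and let e_k = Σ_{|I|=k} ∏_{i∈I} a_i denote the k-th elementary symmetric polynomial of a_1,…,a_N. If e_k ≥ 0 for all k = 1, …, N, then a_i ≥ 0 for all i. -/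
/-! If some `a i` were negative, then `x = -a i > 0` would be a root of `∏ j, (a j + x)`.
But expanding this product in powers of `x` gives `∑ k, e_k x^(N-k)`, whose leading term
`x^N` is positive and whose other terms are nonnegative. -/

open Finset

namespace Finset

variable {ι R : Type*}

theorem prod_add_const_eq_sum_esymm [CommSemiring R] (s : Finset ι) (f : ι → R) (x : R) :
    ∏ i ∈ s, (f i + x) =
      ∑ k ∈ range (#s + 1), (∑ t ∈ s.powersetCard k, ∏ i ∈ t, f i) * x ^ (#s - k) := by
  classical
  rw [prod_add, sum_powerset]
  refine sum_congr rfl fun k _ => ?_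
  rw [sum_mul]
  refine sum_congr rfl fun t ht => ?_
  rw [prod_const, card_sdiff_of_subset (mem_powersetCard.mp ht).1, (mem_powersetCard.mp ht).2]

theorem prod_add_const_pos_of_esymm_nonneg [CommSemiring R] [PartialOrder R]
    [IsStrictOrderedRing R] (s : Finset ι) (f : ι → R)
    (hf : ∀ k, 1 ≤ k → k ≤ #s → 0 ≤ ∑ t ∈ s.powersetCard k, ∏ i ∈ t, f i)
    {x : R} (hx : 0 < x) : 0 < ∏ i ∈ s, (f i + x) := by
  rw [prod_add_const_eq_sum_esymm, sum_range_succ']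
  have leading : 0 < (∑ t ∈ s.powersetCard 0, ∏ i ∈ t, f i) * x ^ (#s - 0) := by
    simpa using pow_pos hx #s
  have rest : 0 ≤ ∑ k ∈ range #s,
      (∑ t ∈ s.powersetCard (k + 1), ∏ i ∈ t, f i) * x ^ (#s - (k + 1)) :=
    sum_nonneg fun k hk =>
      mul_nonneg (hf (k + 1) k.succ_pos (mem_range.mp hk)) (pow_pos hx _).le
  exact add_pos_of_nonneg_of_pos rest leading

end Finset

/-- If all elementary symmetric polynomials `e_k`, `k = 1, …, N`, of real numbers
`a_1, …, a_N` are nonnegative, then all `a_i` are nonnegative. -/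
theorem stmt_11 {N : ℕ} (a : Fin N → ℝ)
    (h : ∀ k, 1 ≤ k → k ≤ N →
      0 ≤ ∑ I ∈ Finset.univ.powersetCard k, ∏ i ∈ I, a i) :
    ∀ i, 0 ≤ a i := by
  intro i
  by_contra! hi
  have hpos : 0 < ∏ j, (a j + -a i) :=
    prod_add_const_pos_of_esymm_nonneg univ a (by simpa using h) (neg_pos.mpr hi)
  have hzero : ∏ j, (a j + -a i) = 0 := prod_eq_zero (mem_univ i) (add_neg_cancel (a i))
  exact hpos.ne' hzero
end

section
/- Every Γ-invariant basic closed semialgebraic set is the semialgebraic set of finitely many Γ-invariant polynomials: if Γ is a finite group acting linearly on ℝ^n and G ⊆ ℝ[x] is a finite set with S(G) = {x : g(x) ≥ 0 for all g ∈ G} invariant under Γ, then there is a finite set H of Γ-invariant polynomials with S(G) = S(H). -/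
open Matrix MvPolynomial Finset

variable {n : ℕ}

noncomputable def subpoly (A : Matrix (Fin n) (Fin n) ℝ) (g : MvPolynomial (Fin n) ℝ) :
    MvPolynomial (Fin n) ℝ :=
  aeval (fun i => ∑ j, C (A i j) * X j) g

lemma eval_subpoly (A : Matrix (Fin n) (Fin n) ℝ) (g : MvPolynomial (Fin n) ℝ)
    (x : Fin n → ℝ) : eval x (subpoly A g) = eval (A.mulVec x) g := by
  rw [subpoly, aeval_def, eval_eval₂]
  have h1 : ((eval x).comp (algebraMap ℝ (MvPolynomial (Fin n) ℝ))) = RingHom.id ℝ := by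
    ext r; simp
  rw [h1, eval₂_id]
  have h2 : (fun i => eval x (∑ j, C (A i j) * X j)) = A.mulVec x := by
    funext i; simp [Matrix.mulVec, dotProduct]
  exact congrArg (fun v => eval v g) h2

lemma esymm_nonneg_imp {ι : Type*} [Fintype ι] [DecidableEq ι] (t : ι → ℝ)
    (h : ∀ k, 0 ≤ ∑ s ∈ Finset.univ.powersetCard k, ∏ i ∈ s, t i) :
    ∀ i, 0 ≤ t i := by
  by_contra hc
  push_neg at hc
  obtain ⟨i₀, hi₀⟩ := hc
  set c : ℝ := -t i₀ with hc
  have hcpos : 0 < c := by simp [hc]; linarith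
  have hzero : ∏ i : ι, (c + t i) = 0 :=
    Finset.prod_eq_zero (Finset.mem_univ i₀) (by simp [hc])
  have hexp : ∏ i : ι, (c + t i)
      = ∑ j ∈ Finset.range (Fintype.card ι + 1),
          c ^ j * ∑ s ∈ Finset.univ.powersetCard (Fintype.card ι - j), ∏ i ∈ s, t i := by
    rw [Finset.prod_add, Finset.sum_powerset]
    rw [Finset.card_univ]
    refine Finset.sum_congr rfl fun j hj => ?_
    rw [Finset.mul_sum]
    refine Finset.sum_nbij' (fun u => Finset.univ \ u) (fun u => Finset.univ \ u)
      ?_ ?_ ?_ ?_ ?_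
    · intro u hu
      rw [Finset.mem_powersetCard_univ] at hu ⊢
      rw [Finset.card_univ_diff, hu]
    · intro u hu
      rw [Finset.mem_powersetCard_univ] at hu ⊢
      rw [Finset.card_univ_diff, hu]
      rw [Finset.mem_range] at hj
      omega
    · intro u hu; simp
    · intro u hu; simp
    · intro u hu
      rw [Finset.mem_powersetCard_univ] at hu
      rw [Finset.prod_const, hu]
  rw [hexp] at hzero
  have hpos : 0 < ∑ j ∈ Finset.range (Fintype.card ι + 1),
      c ^ j * ∑ s ∈ Finset.univ.powersetCard (Fintype.card ι - j), ∏ i ∈ s, t i := by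
    refine Finset.sum_pos' (fun j _ => mul_nonneg (by positivity) (h _)) ?_
    refine ⟨Fintype.card ι, Finset.self_mem_range_succ _, ?_⟩
    have : (Finset.univ.powersetCard (Fintype.card ι - Fintype.card ι) : Finset (Finset ι))
        = {∅} := by simp
    rw [this]
    simp [pow_pos hcpos]
  linarith

/-- Every `Γ`-invariant basic closed semialgebraic set is the semialgebraic set of
finitely many `Γ`-invariant polynomials: if `Γ` is a finite group acting linearly on
`ℝ^n` via `θ` and `G` is a finite set of polynomials with `S(G) = {x : g(x) ≥ 0, g ∈ G}`
invariant under `Γ`, then there is a finite set `H` of `Γ`-invariant polynomials with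
`S(G) = S(H)`. -/
theorem stmt_12 {Γ : Type*} [Group Γ] [Fintype Γ] {n : ℕ}
    (θ : Γ →* Matrix.GeneralLinearGroup (Fin n) ℝ)
    (G : Finset (MvPolynomial (Fin n) ℝ))
    (hinv : ∀ (γ : Γ) (x : Fin n → ℝ), (∀ g ∈ G, 0 ≤ MvPolynomial.eval x g) →
      (∀ g ∈ G, 0 ≤ MvPolynomial.eval ((θ γ : Matrix (Fin n) (Fin n) ℝ).mulVec x) g)) :
    ∃ H : Finset (MvPolynomial (Fin n) ℝ),
      (∀ h ∈ H, ∀ (γ : Γ) (x : Fin n → ℝ),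
        MvPolynomial.eval ((θ γ : Matrix (Fin n) (Fin n) ℝ).mulVec x) h =
          MvPolynomial.eval x h) ∧
      {x : Fin n → ℝ | ∀ g ∈ G, 0 ≤ MvPolynomial.eval x g} =
        {x : Fin n → ℝ | ∀ h ∈ H, 0 ≤ MvPolynomial.eval x h} := by
  classical
  -- elementary symmetric polynomials of the orbit of `g`
  set hpoly : MvPolynomial (Fin n) ℝ → ℕ → MvPolynomial (Fin n) ℝ :=
    fun g k => ∑ s ∈ (Finset.univ : Finset Γ).powersetCard k,
      ∏ γ ∈ s, subpoly (θ γ : Matrix (Fin n) (Fin n) ℝ) g with hpoly_def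
  have heval : ∀ g k (x : Fin n → ℝ), eval x (hpoly g k)
      = ∑ s ∈ (Finset.univ : Finset Γ).powersetCard k,
          ∏ γ ∈ s, eval ((θ γ : Matrix (Fin n) (Fin n) ℝ).mulVec x) g := by
    intro g k x
    rw [hpoly_def]
    rw [map_sum]
    refine Finset.sum_congr rfl fun s _ => ?_
    rw [map_prod]
    exact Finset.prod_congr rfl fun γ _ => eval_subpoly _ _ _
  refine ⟨G.biUnion (fun g => (Finset.range (Fintype.card Γ + 1)).image (hpoly g)), ?_, ?_⟩
  · -- invariance
    intro h hh γ₀ x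
    rw [Finset.mem_biUnion] at hh
    obtain ⟨g, hg, hh⟩ := hh
    rw [Finset.mem_image] at hh
    obtain ⟨k, _, rfl⟩ := hh
    rw [heval, heval]
    have hstep : ∀ γ : Γ,
        ((θ γ : Matrix (Fin n) (Fin n) ℝ).mulVec
          ((θ γ₀ : Matrix (Fin n) (Fin n) ℝ).mulVec x))
        = (θ (γ * γ₀) : Matrix (Fin n) (Fin n) ℝ).mulVec x := by
      intro γ
      rw [Matrix.mulVec_mulVec, _root_.map_mul]
      rfl
    calc ∑ s ∈ (Finset.univ : Finset Γ).powersetCard k,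
          ∏ γ ∈ s, eval ((θ γ : Matrix (Fin n) (Fin n) ℝ).mulVec
            ((θ γ₀ : Matrix (Fin n) (Fin n) ℝ).mulVec x)) g
        = ∑ s ∈ (Finset.univ : Finset Γ).powersetCard k,
          ∏ γ ∈ s, eval ((θ (γ * γ₀) : Matrix (Fin n) (Fin n) ℝ).mulVec x) g := by
          exact Finset.sum_congr rfl fun s _ => Finset.prod_congr rfl fun γ _ => by
            rw [hstep]
      _ = ∑ s ∈ (Finset.univ : Finset Γ).powersetCard k,
          ∏ γ ∈ s, eval ((θ γ : Matrix (Fin n) (Fin n) ℝ).mulVec x) g := by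
          refine Finset.sum_nbij' (fun s => s.map (Equiv.mulRight γ₀).toEmbedding)
            (fun s => s.map (Equiv.mulRight γ₀⁻¹).toEmbedding) ?_ ?_ ?_ ?_ ?_
          · intro s hs
            rw [Finset.mem_powersetCard_univ] at hs ⊢
            rw [Finset.card_map, hs]
          · intro s hs
            rw [Finset.mem_powersetCard_univ] at hs ⊢
            rw [Finset.card_map, hs]
          · intro s _; ext a; simp
          · intro s _; ext a; simp
          · intro s _
            rw [Finset.prod_map]
            exact Finset.prod_congr rfl fun γ _ => rfl
  · -- set equality
    ext x
    simp only [Set.mem_setOf_eq]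
    constructor
    · intro hx h hh
      rw [Finset.mem_biUnion] at hh
      obtain ⟨g, hg, hh⟩ := hh
      rw [Finset.mem_image] at hh
      obtain ⟨k, _, rfl⟩ := hh
      rw [heval]
      exact Finset.sum_nonneg fun s _ => Finset.prod_nonneg fun γ _ =>
        hinv γ x hx g hg
    · intro hx g hg
      have hkey : ∀ γ : Γ, 0 ≤ eval ((θ γ : Matrix (Fin n) (Fin n) ℝ).mulVec x) g := by
        refine esymm_nonneg_imp _ fun k => ?_
        by_cases hk : k ≤ Fintype.card Γ
        · have := hx (hpoly g k) (Finset.mem_biUnion.2 ⟨g, hg,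
            Finset.mem_image.2 ⟨k, Finset.mem_range.2 (by omega), rfl⟩⟩)
          rwa [heval] at this
        · have : ((Finset.univ : Finset Γ).powersetCard k) = ∅ := by
            rw [Finset.powersetCard_eq_empty]
            rw [Finset.card_univ]; omega
          rw [this, Finset.sum_empty]
      have h1 := hkey 1
      rwa [_root_.map_one, Units.val_one, Matrix.one_mulVec] at h1
end

section
/- Let D_4 = ⟨s, d : d⁴ = s² = e, ds = sd⁻¹⟩ act on ℝ² by s·(x,y) = (y,x) and d·(x,y) = (−y,x). Then there is no D_4-invariant subset S of ℝ² of size 28 = dim ℝ[x,y]_{≤6} that is unisolvent for the polynomials of degree at most 6. -/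
/-!
Off the axes and the diagonals the `D₄`-orbits in `ℝ²` have 8 points, on them (away from the
origin) 4. So if `S` meets `a` orbits off the diagonals and `b` orbits off the axes, the orbits
off both being counted twice, then `4 (a + b) ≤ 28`, whence `a ≤ 3` or `b ≤ 3`. The
`D₄`-invariants `1, u, u², v` (`u = x² + y²`, `v = x²y²`) of degree `≤ 4` span a
4-dimensional space, so some nonzero combination `g` of them vanishes on those `≤ 3` orbits;
then `(x² - y²) g`, respectively `xy g`, is a nonzero polynomial of degree `≤ 6` vanishing on `S`.
-/

open MvPolynomial Finset

section Interpolation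

variable {K σ τ : Type*} [Field K]

theorem MvPolynomial.eval_bind₁ (x : σ → K) (θ : τ → MvPolynomial σ K) (P : MvPolynomial τ K) :
    eval x (bind₁ θ P) = eval (fun j => eval x (θ j)) P :=
  eval₂Hom_bind₁ (RingHom.id K) x θ P

theorem exists_ne_zero_forall_eval_sum_smul_eq_zero {n : ℕ} (P : Fin n → MvPolynomial τ K)
    (F : Finset (τ → K)) (hF : #F < n) :
    ∃ c : Fin n → K, c ≠ 0 ∧ ∀ z ∈ F, eval z (∑ i, c i • P i) = 0 := by
  let L : (Fin n → K) →ₗ[K] (F → K) :=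
    LinearMap.pi fun z => (aeval z.1).toLinearMap ∘ₗ Fintype.linearCombination K P
  have hker : LinearMap.ker L ≠ ⊥ :=
    LinearMap.ker_ne_bot_of_finrank_lt (by simpa using hF)
  obtain ⟨c, hc, hc0⟩ := Submodule.exists_mem_ne_zero_of_ne_bot hker
  refine ⟨c, hc0, fun z hz => ?_⟩
  have := congrFun (LinearMap.mem_ker.mp hc) ⟨z, hz⟩
  simpa [L, Fintype.linearCombination_apply] using this

theorem exists_ne_zero_totalDegree_le_forall_eval_eq_zero [DecidableEq K] [DecidableEq (τ → K)]
    (θ : τ → MvPolynomial σ K) {n d : ℕ} (P : Fin n → MvPolynomial τ K)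
    (hP : LinearIndependent K fun i => bind₁ θ (P i)) {h : MvPolynomial σ K} (hh : h ≠ 0)
    (hdeg : ∀ i, h.totalDegree + (bind₁ θ (P i)).totalDegree ≤ d)
    (S : Finset (σ → K)) (hS : #({p ∈ S | eval p h ≠ 0}.image fun p j => eval p (θ j)) < n) :
    ∃ q : MvPolynomial σ K, q ≠ 0 ∧ q.totalDegree ≤ d ∧ ∀ p ∈ S, eval p q = 0 := by
  obtain ⟨c, hc0, hc⟩ := exists_ne_zero_forall_eval_sum_smul_eq_zero P _ hS
  have hsum : bind₁ θ (∑ i, c i • P i) = ∑ i, c i • bind₁ θ (P i) := by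
    simp only [map_sum, map_smul]
  refine ⟨h * bind₁ θ (∑ i, c i • P i), mul_ne_zero hh ?_, ?_, fun p hp => ?_⟩
  · rw [hsum]
    exact fun h0 => hc0 (funext (Fintype.linearIndependent_iff.mp hP c h0))
  · have : (bind₁ θ (∑ i, c i • P i)).totalDegree ≤ d - h.totalDegree := by
      rw [hsum]
      refine (totalDegree_finsetSum _ _).trans (Finset.sup_le fun i _ => ?_)
      exact (totalDegree_smul_le _ _).trans (by have := hdeg i; omega)
    obtain ⟨i, -⟩ := Function.ne_iff.mp hc0
    have := hdeg i
    exact (totalDegree_mul _ _).trans (by omega)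
  · by_cases hp0 : eval p h = 0
    · simp [hp0]
    · rw [map_mul, eval_bind₁, hc _ (mem_image_of_mem _ (mem_filter.mpr ⟨hp, hp0⟩)), mul_zero]

end Interpolation

noncomputable def d4Invariants : Fin 2 → MvPolynomial (Fin 2) ℝ :=
  ![X 0 ^ 2 + X 1 ^ 2, X 0 ^ 2 * X 1 ^ 2]

@[simp]
theorem eval_d4Invariants_zero (p : Fin 2 → ℝ) :
    eval p (d4Invariants 0) = p 0 ^ 2 + p 1 ^ 2 := by
  simp [d4Invariants]

@[simp]
theorem eval_d4Invariants_one (p : Fin 2 → ℝ) :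
    eval p (d4Invariants 1) = p 0 ^ 2 * p 1 ^ 2 := by
  simp [d4Invariants]

noncomputable def d4Orbit (p : Fin 2 → ℝ) : Finset (Fin 2 → ℝ) :=
  {![p 0, p 1], ![-p 0, p 1], ![p 0, -p 1], ![-p 0, -p 1],
    ![p 1, p 0], ![-p 1, p 0], ![p 1, -p 0], ![-p 1, -p 0]}

theorem four_mul_le_card_d4Orbit (p : Fin 2 → ℝ) :
    4 * ((if p 0 ^ 2 - p 1 ^ 2 ≠ 0 then 1 else 0) + (if p 0 * p 1 ≠ 0 then 1 else 0))
      ≤ #(d4Orbit p) := by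
  have hne : p 0 ^ 2 - p 1 ^ 2 ≠ 0 → p 0 ≠ p 1 ∧ p 0 ≠ -p 1 ∧ p 1 ≠ -p 0 := fun h =>
    ⟨fun e => h (by rw [e]; ring), fun e => h (by rw [e]; ring), fun e => h (by rw [e]; ring)⟩
  unfold d4Orbit
  split_ifs with hd hv hv
  · obtain ⟨hx, hy⟩ := mul_ne_zero_iff.mp hv
    obtain ⟨h1, h2, h3⟩ := hne hd
    repeat rw [card_insert_of_notMem]
    · rfl
    all_goals simp [Matrix.vecCons_inj, self_eq_neg, neg_eq_self, neg_eq_iff_eq_neg, *, h1.symm]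
  · obtain ⟨h1, h2, h3⟩ := hne hd
    calc 4 * (1 + 0)
        = #({![p 0, p 1], ![-p 0, -p 1], ![p 1, p 0], ![-p 1, -p 0]} : Finset (Fin 2 → ℝ)) := by
          repeat rw [card_insert_of_notMem]
          · rfl
          all_goals rcases mul_eq_zero.mp (not_not.mp hv) with h | h
          all_goals simp_all [Matrix.vecCons_inj, self_eq_neg]
      _ ≤ _ := card_le_card (by intro q; simp only [mem_insert, mem_singleton]; tauto)
  · obtain ⟨hx, hy⟩ := mul_ne_zero_iff.mp hv
    calc 4 * (0 + 1)
        = #({![p 0, p 1], ![-p 0, p 1], ![p 0, -p 1], ![-p 0, -p 1]} : Finset (Fin 2 → ℝ)) := by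
          repeat rw [card_insert_of_notMem]
          · rfl
          all_goals simp [Matrix.vecCons_inj, self_eq_neg, neg_eq_self, hx, hy]
      _ ≤ _ := card_le_card (by intro q; simp only [mem_insert, mem_singleton]; tauto)
  · simp

theorem d4Orbit_subset {S : Finset (Fin 2 → ℝ)} (hs : ∀ p ∈ S, (![p 1, p 0] : Fin 2 → ℝ) ∈ S)
    (hd : ∀ p ∈ S, (![-(p 1), p 0] : Fin 2 → ℝ) ∈ S) {p : Fin 2 → ℝ} (hp : p ∈ S) :
    d4Orbit p ⊆ S := by
  have r1 := hd _ hp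
  have r2 := hd _ r1
  have r3 := hd _ r2
  have s0 := hs _ hp
  have s1 := hd _ s0
  have s2 := hd _ s1
  have s3 := hd _ s2
  simp only [Matrix.cons_val_zero, Matrix.cons_val_one, neg_neg] at r2 r3 s1 s2 s3
  rw [(FinVec.etaExpand_eq p).symm] at hp
  intro q hq
  simp only [d4Orbit, mem_insert, mem_singleton] at hq
  rcases hq with rfl | rfl | rfl | rfl | rfl | rfl | rfl | rfl <;> assumption

theorem eval_d4Invariants_of_mem_d4Orbit {p q : Fin 2 → ℝ} (hq : q ∈ d4Orbit p) :
    (fun j => eval q (d4Invariants j)) = fun j => eval p (d4Invariants j) := by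
  simp only [d4Orbit, mem_insert, mem_singleton] at hq
  simp only [funext_iff, Fin.forall_fin_two, eval_d4Invariants_zero, eval_d4Invariants_one]
  rcases hq with rfl | rfl | rfl | rfl | rfl | rfl | rfl | rfl <;>
    constructor <;> simp only [Matrix.cons_val_zero, Matrix.cons_val_one] <;> ring

theorem four_mul_card_image_add_card_image_le {S : Finset (Fin 2 → ℝ)}
    (hs : ∀ p ∈ S, (![p 1, p 0] : Fin 2 → ℝ) ∈ S)
    (hd : ∀ p ∈ S, (![-(p 1), p 0] : Fin 2 → ℝ) ∈ S) :
    4 * (#({p ∈ S | p 0 ^ 2 - p 1 ^ 2 ≠ 0}.image fun p j => eval p (d4Invariants j)) +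
      #({p ∈ S | p 0 * p 1 ≠ 0}.image fun p j => eval p (d4Invariants j))) ≤ #S := by
  set φ : (Fin 2 → ℝ) → Fin 2 → ℝ := fun p j => eval p (d4Invariants j)
  -- `(x² - y²)² = u² - 4v` and `(xy)² = v`: both filters only depend on the invariants.
  have hD (p : Fin 2 → ℝ) : p 0 ^ 2 - p 1 ^ 2 ≠ 0 ↔ φ p 0 ^ 2 - 4 * φ p 1 ≠ 0 := by
    simp only [φ, eval_d4Invariants_zero, eval_d4Invariants_one]
    rw [show (p 0 ^ 2 + p 1 ^ 2) ^ 2 - 4 * (p 0 ^ 2 * p 1 ^ 2) = (p 0 ^ 2 - p 1 ^ 2) ^ 2 by ring]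
    exact (pow_ne_zero_iff two_ne_zero).symm
  have hV (p : Fin 2 → ℝ) : p 0 * p 1 ≠ 0 ↔ φ p 1 ≠ 0 := by
    simp only [φ, eval_d4Invariants_one, ← mul_pow]
    exact (pow_ne_zero_iff two_ne_zero).symm
  have hX :
      {p ∈ S | p 0 ^ 2 - p 1 ^ 2 ≠ 0}.image φ = {z ∈ S.image φ | z 0 ^ 2 - 4 * z 1 ≠ 0} := by
    rw [filter_image]; exact congrArg _ (filter_congr fun p _ => hD p)
  have hY : {p ∈ S | p 0 * p 1 ≠ 0}.image φ = {z ∈ S.image φ | z 1 ≠ 0} := by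
    rw [filter_image]; exact congrArg _ (filter_congr fun p _ => hV p)
  rw [hX, hY, card_filter, card_filter, card_eq_sum_card_image φ S,
    mul_add, mul_sum, mul_sum, ← sum_add_distrib]
  refine sum_le_sum fun z hz => ?_
  obtain ⟨p, hp, rfl⟩ := mem_image.mp hz
  simp only [← mul_add, ← hD, ← hV]
  refine (four_mul_le_card_d4Orbit p).trans (card_le_card fun q hq => ?_)
  exact mem_filter.mpr ⟨d4Orbit_subset hs hd hp hq, eval_d4Invariants_of_mem_d4Orbit hq⟩

/-- `1, u, u², v` in the invariant coordinates `u = x² + y²`, `v = x²y²`. -/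
noncomputable def quarticInvariantBasis : Fin 4 → MvPolynomial (Fin 2) ℝ :=
  ![1, X 0, X 0 ^ 2, X 1]

theorem linearIndependent_bind₁_quarticInvariantBasis :
    LinearIndependent ℝ fun i => bind₁ d4Invariants (quarticInvariantBasis i) := by
  refine Fintype.linearIndependent_iff.mpr fun c hc => ?_
  have hcomb (p : Fin 2 → ℝ) : c 0 + c 1 * (p 0 ^ 2 + p 1 ^ 2) + c 2 * (p 0 ^ 2 + p 1 ^ 2) ^ 2
      + c 3 * (p 0 ^ 2 * p 1 ^ 2) = 0 := by
    simpa [Fin.sum_univ_four, quarticInvariantBasis, eval_bind₁, add_assoc]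
      using congrArg (eval p) hc
  have e00 := hcomb ![0, 0]
  have e10 := hcomb ![1, 0]
  have e20 := hcomb ![2, 0]
  have e11 := hcomb ![1, 1]
  norm_num at e00 e10 e20 e11
  obtain ⟨h0, h1, h2, h3⟩ : c 0 = 0 ∧ c 1 = 0 ∧ c 2 = 0 ∧ c 3 = 0 :=
    ⟨by linarith, by linarith, by linarith, by linarith⟩
  intro i
  fin_cases i <;> assumption

theorem totalDegree_bind₁_quarticInvariantBasis_le (i : Fin 4) :
    (bind₁ d4Invariants (quarticInvariantBasis i)).totalDegree ≤ 4 := by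
  have hu : (d4Invariants 0).totalDegree ≤ 2 :=
    (totalDegree_add _ _).trans (by simp [totalDegree_X_pow])
  have hv : (d4Invariants 1).totalDegree ≤ 4 :=
    (totalDegree_mul _ _).trans (by simp [totalDegree_X_pow])
  fin_cases i
  · simp [quarticInvariantBasis]
  · simpa [quarticInvariantBasis] using hu.trans (by norm_num)
  · simpa [quarticInvariantBasis] using (totalDegree_pow _ 2).trans (by omega)
  · simpa [quarticInvariantBasis] using hv

theorem exists_ne_zero_totalDegree_le_six_of_card_lt {S : Finset (Fin 2 → ℝ)}
    {h : MvPolynomial (Fin 2) ℝ} (hh : h ≠ 0) (hdeg : h.totalDegree ≤ 2)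
    (hS : #({p ∈ S | eval p h ≠ 0}.image fun p j => eval p (d4Invariants j)) < 4) :
    ∃ q : MvPolynomial (Fin 2) ℝ, q ≠ 0 ∧ q.totalDegree ≤ 6 ∧ ∀ p ∈ S, eval p q = 0 :=
  exists_ne_zero_totalDegree_le_forall_eval_eq_zero d4Invariants quarticInvariantBasis
    linearIndependent_bind₁_quarticInvariantBasis hh
    (fun i => by have := totalDegree_bind₁_quarticInvariantBasis_le i; omega) S hS

/-- For the `D₄` action on `ℝ²` generated by `s·(x,y) = (y,x)` and `d·(x,y) = (−y,x)`,
there is no `D₄`-invariant set of `28 = dim ℝ[x,y]_{≤6}` points that is unisolvent for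
the polynomials of degree at most `6`. -/
theorem stmt_13 :
    ¬ ∃ S : Finset (Fin 2 → ℝ), S.card = 28 ∧
      -- invariance under the reflection `s`
      (∀ p ∈ S, (![p 1, p 0] : Fin 2 → ℝ) ∈ S) ∧
      -- invariance under the rotation `d`
      (∀ p ∈ S, (![-(p 1), p 0] : Fin 2 → ℝ) ∈ S) ∧
      -- unisolvence for `ℝ[x,y]_{≤6}`
      (∀ q : MvPolynomial (Fin 2) ℝ, q.totalDegree ≤ 6 →
        (∀ p ∈ S, MvPolynomial.eval p q = 0) → q = 0) := by
  rintro ⟨S, hcard, hs, hd, huni⟩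
  have hcount := four_mul_card_image_add_card_image_le hs hd
  have hdiag := exists_ne_zero_totalDegree_le_six_of_card_lt (S := S) (h := X 0 ^ 2 - X 1 ^ 2)
    (fun h => by simpa using congrArg (eval ![1, 0]) h)
    ((totalDegree_sub _ _).trans (by simp [totalDegree_X_pow]))
  have haxes := exists_ne_zero_totalDegree_le_six_of_card_lt (S := S) (h := X 0 * X 1)
    (mul_ne_zero (X_ne_zero 0) (X_ne_zero 1)) ((totalDegree_mul _ _).trans (by simp))
  simp only [map_sub, map_pow, map_mul, eval_X] at hdiag haxes
  obtain ⟨q, hq0, hqdeg, hqS⟩ := (Nat.lt_or_ge _ 4).elim hdiag fun h => haxes (by omega)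
  exact hq0 (huni q hqdeg hqS)
end

section
/- Suppose the group Γ is finite with orbit sizes o_1 < o_2 < … (the possible cardinalities of Γ-orbits in ℝ^n). If a Γ-invariant minimal unisolvent set S for ℝ[x]_{≤2d} exists, then the system Σ_i k_i o_i = dim ℝ[x]_{≤2d} and Σ_i k_i = dim ℝ[x]^Γ_{≤2d} has a solution in nonnegative integers k_i. -/
open Matrix MvPolynomial BigOperators


lemma aux_eval_bind₁ {σ τ : Type*} (x : τ → ℝ) (g : σ → MvPolynomial τ ℝ)
    (p : MvPolynomial σ ℝ) :
    eval x (bind₁ g p) = eval (fun i => eval x (g i)) p :=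
  eval₂Hom_bind₁ _ _ _ _

lemma aux_totalDegree_bind₁_le {σ τ R : Type*} [CommSemiring R]
    (g : σ → MvPolynomial τ R) (hg : ∀ i, (g i).totalDegree ≤ 1)
    (p : MvPolynomial σ R) : (bind₁ g p).totalDegree ≤ p.totalDegree := by
  conv_lhs => rw [p.as_sum]
  rw [map_sum]
  apply totalDegree_finsetSum_le
  intro m hm
  rw [bind₁_monomial]
  refine (totalDegree_mul _ _).trans ?_
  rw [totalDegree_C, zero_add]
  refine le_trans (totalDegree_finset_prod _ _) ?_
  have h1 : ∀ i ∈ m.support, ((g i) ^ (m i)).totalDegree ≤ m i := by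
    intro i _
    refine (totalDegree_pow _ _).trans ?_
    calc m i * (g i).totalDegree ≤ m i * 1 := Nat.mul_le_mul_left _ (hg i)
      _ = m i := mul_one _
  calc ∑ i ∈ m.support, ((g i) ^ (m i)).totalDegree
      ≤ ∑ i ∈ m.support, m i := Finset.sum_le_sum h1
    _ ≤ p.totalDegree := le_totalDegree hm

/-- If a `Γ`-invariant minimal unisolvent set `S` for `ℝ[x]_{≤2d}` exists, then the
system `Σ_i k_i o_i = dim ℝ[x]_{≤2d}`, `Σ_i k_i = dim ℝ[x]^Γ_{≤2d}` has a solution in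
nonnegative integers, where the `o_i` are the possible sizes of `Γ`-orbits in `ℝ^n` and
`k_i` counts the orbits of `S` of size `o_i`. -/
theorem stmt_19 {Γ : Type*} [Group Γ] [Fintype Γ] {n d : ℕ}
    (θ : Γ →* Matrix.GeneralLinearGroup (Fin n) ℝ)
    (S : Finset (Fin n → ℝ))
    -- `S` is `Γ`-invariant
    (hSinv : ∀ (γ : Γ), ∀ x ∈ S, (θ γ : Matrix (Fin n) (Fin n) ℝ).mulVec x ∈ S)
    -- `S` is unisolvent for `ℝ[x]_{≤2d}`
    (hSuni : ∀ p : MvPolynomial (Fin n) ℝ, p.totalDegree ≤ 2 * d →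
      (∀ x ∈ S, MvPolynomial.eval x p = 0) → p = 0)
    -- `S` is minimal: `|S| = dim ℝ[x]_{≤2d}`
    (hScard : S.card = Module.finrank ℝ (MvPolynomial.restrictTotalDegree (Fin n) ℝ (2 * d))) :
    ∃ k : ℕ → ℕ,
      -- `k` is supported on actual orbit sizes
      (∀ o, k o ≠ 0 → ∃ x : Fin n → ℝ,
        (Set.range fun γ : Γ => (θ γ : Matrix (Fin n) (Fin n) ℝ).mulVec x).ncard = o) ∧
      (∑ o ∈ Finset.Icc 1 (Fintype.card Γ), k o * o) =
        Module.finrank ℝ (MvPolynomial.restrictTotalDegree (Fin n) ℝ (2 * d)) ∧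
      (∑ o ∈ Finset.Icc 1 (Fintype.card Γ), k o) =
        Module.finrank ℝ (invariantRestrict θ (2 * d)) := by
  classical
  set A : Γ → Matrix (Fin n) (Fin n) ℝ := fun γ => (θ γ : Matrix (Fin n) (Fin n) ℝ) with hA
  -- basic facts about the action
  have hA1 : A 1 = 1 := by simp [hA]
  have hAmul : ∀ γ γ' (x : Fin n → ℝ), (A γ).mulVec ((A γ').mulVec x) = (A (γ * γ')).mulVec x := by
    intro γ γ' x
    rw [mulVec_mulVec]
    simp [hA]
  -- orbits
  set orb : (Fin n → ℝ) → Finset (Fin n → ℝ) :=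
    fun x => Finset.image (fun γ : Γ => (A γ).mulVec x) Finset.univ with horb
  have hmem_orb : ∀ x y, y ∈ orb x ↔ ∃ γ, (A γ).mulVec x = y := by
    intro x y; simp [horb]
  have hself : ∀ x, x ∈ orb x := by
    intro x
    rw [hmem_orb]
    exact ⟨1, by rw [hA1, one_mulVec]⟩
  have horb_smul : ∀ (γ : Γ) x, orb ((A γ).mulVec x) = orb x := by
    intro γ x
    ext y
    rw [hmem_orb, hmem_orb]
    constructor
    · rintro ⟨γ', rfl⟩; exact ⟨γ' * γ, (hAmul γ' γ x).symm⟩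
    · rintro ⟨γ', rfl⟩; exact ⟨γ' * γ⁻¹, by rw [hAmul, inv_mul_cancel_right]⟩
  have horb_eq_of_mem : ∀ x y, y ∈ orb x → orb y = orb x := by
    intro x y hy
    rw [hmem_orb] at hy
    obtain ⟨γ, rfl⟩ := hy
    exact horb_smul γ x
  have horb_sub : ∀ x ∈ S, orb x ⊆ S := by
    intro x hx y hy
    rw [hmem_orb] at hy
    obtain ⟨γ, rfl⟩ := hy
    exact hSinv γ x hx
  -- the finset of orbits and the counting function
  set T : Finset (Finset (Fin n → ℝ)) := S.image orb with hT
  set k : ℕ → ℕ := fun o => (T.filter fun t => t.card = o).card with hk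
  have hT_ne : ∀ t ∈ T, t.Nonempty := by
    intro t ht
    rw [hT, Finset.mem_image] at ht
    obtain ⟨x, _, rfl⟩ := ht
    exact ⟨x, hself x⟩
  have hT_card : ∀ t ∈ T, t.card ∈ Finset.Icc 1 (Fintype.card Γ) := by
    intro t ht
    rw [Finset.mem_Icc]
    refine ⟨Finset.card_pos.mpr (hT_ne t ht), ?_⟩
    rw [hT, Finset.mem_image] at ht
    obtain ⟨x, _, rfl⟩ := ht
    calc (orb x).card ≤ Finset.univ.card := Finset.card_image_le
      _ = Fintype.card Γ := Finset.card_univ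
  have horbT : ∀ x ∈ S, orb x ∈ T := fun x hx => Finset.mem_image_of_mem orb hx
  -- S is the disjoint union of its orbits
  have hSbU : S = T.biUnion id := by
    ext x
    simp only [Finset.mem_biUnion, id]
    constructor
    · intro hx; exact ⟨orb x, horbT x hx, hself x⟩
    · rintro ⟨t, ht, hxt⟩
      rw [hT, Finset.mem_image] at ht
      obtain ⟨y, hy, rfl⟩ := ht
      exact horb_sub y hy hxt
  have hdisj : ∀ t1 ∈ T, ∀ t2 ∈ T, t1 ≠ t2 → Disjoint t1 t2 := by
    intro t1 ht1 t2 ht2 hne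
    rw [Finset.disjoint_left]
    intro z hz1 hz2
    rw [hT, Finset.mem_image] at ht1 ht2
    obtain ⟨x1, _, rfl⟩ := ht1
    obtain ⟨x2, _, rfl⟩ := ht2
    exact hne ((horb_eq_of_mem x1 z hz1).symm.trans (horb_eq_of_mem x2 z hz2))
  have hScard' : S.card = ∑ t ∈ T, t.card := by
    rw [hSbU]
    exact Finset.card_biUnion hdisj
  -- sum identities
  have hsum1 : (∑ o ∈ Finset.Icc 1 (Fintype.card Γ), k o * o) = ∑ t ∈ T, t.card := by
    rw [← Finset.sum_fiberwise_of_maps_to hT_card (fun t => t.card)]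
    refine Finset.sum_congr rfl ?_
    intro o _
    rw [hk]
    rw [Finset.sum_congr rfl (fun t ht => (Finset.mem_filter.mp ht).2)]
    rw [Finset.sum_const, smul_eq_mul]
  have hsum2 : (∑ o ∈ Finset.Icc 1 (Fintype.card Γ), k o) = T.card := by
    rw [hk]
    exact (Finset.card_eq_sum_card_fiberwise hT_card).symm
  refine ⟨k, ?_, ?_, ?_⟩
  · -- support condition
    intro o hko
    obtain ⟨t, ht⟩ := Finset.card_ne_zero.mp hko
    rw [Finset.mem_filter] at ht
    obtain ⟨htT, hto⟩ := ht
    rw [hT, Finset.mem_image] at htT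
    obtain ⟨x, hx, rfl⟩ := htT
    refine ⟨x, ?_⟩
    have hco : (Set.range fun γ : Γ => (A γ).mulVec x) = ↑(orb x) := by
      rw [horb]
      simp
    rw [hco, Set.ncard_coe_finset]
    exact hto
  · -- first sum
    rw [hsum1, ← hScard']
    exact hScard
  · -- second sum
    rw [hsum2]
    -- the evaluation map on polynomials of degree at most 2d
    set V := restrictTotalDegree (Fin n) ℝ (2 * d) with hV
    let E : V →ₗ[ℝ] (↥S → ℝ) :=
      { toFun := fun p s => eval (s : Fin n → ℝ) (p : MvPolynomial (Fin n) ℝ)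
        map_add' := by intro p q; funext s; simp
        map_smul' := by intro c p; funext s; simp }
    have hEapp : ∀ (p : V) (s : ↥S), E p s = eval (s : Fin n → ℝ) (p : MvPolynomial (Fin n) ℝ) :=
      fun p s => rfl
    have hEinj : Function.Injective E := by
      rw [← LinearMap.ker_eq_bot, eq_bot_iff]
      intro p hp
      rw [LinearMap.mem_ker] at hp
      have hp0 : (p : MvPolynomial (Fin n) ℝ) = 0 := by
        apply hSuni _ ((mem_restrictTotalDegree _ _ _).mp p.2)
        intro x hx
        have := congrFun hp ⟨x, hx⟩
        rwa [hEapp] at this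
      exact Submodule.mem_bot ℝ |>.mpr (Subtype.ext hp0)
    have hrank : Module.finrank ℝ V = Module.finrank ℝ (↥S → ℝ) := by
      rw [Module.finrank_fintype_fun_eq_card, Fintype.card_coe, hScard]
    have hEsurj : Function.Surjective E :=
      (LinearMap.injective_iff_surjective_of_finrank_eq_finrank hrank).mp hEinj
    -- representatives of orbits
    have hrepne : ∀ t : ↥T, (t : Finset (Fin n → ℝ)).Nonempty := fun t => hT_ne t t.2
    set rep : ↥T → (Fin n → ℝ) := fun t => (hrepne t).choose with hrep
    have hrep_mem : ∀ t : ↥T, rep t ∈ (t : Finset (Fin n → ℝ)) := fun t => (hrepne t).choose_spec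
    have hrepS : ∀ t : ↥T, rep t ∈ S := by
      intro t
      obtain ⟨x, hx, hxt⟩ := Finset.mem_image.mp t.2
      exact horb_sub x hx (by rw [hxt]; exact hrep_mem t)
    have horb_rep : ∀ t : ↥T, orb (rep t) = (t : Finset (Fin n → ℝ)) := by
      intro t
      obtain ⟨x, hx, hxt⟩ := Finset.mem_image.mp t.2
      rw [horb_eq_of_mem x (rep t) (by rw [hxt]; exact hrep_mem t), hxt]
    -- composition with the linear maps
    set L : Γ → Fin n → MvPolynomial (Fin n) ℝ := fun γ i => ∑ j, C (A γ i j) * X j with hL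
    have hLdeg : ∀ γ i, (L γ i).totalDegree ≤ 1 := by
      intro γ i
      apply totalDegree_finsetSum_le
      intro j _
      refine (totalDegree_mul _ _).trans ?_
      simp
    have hcomp_eval : ∀ (γ : Γ) (x : Fin n → ℝ) (p : MvPolynomial (Fin n) ℝ),
        eval x (bind₁ (L γ) p) = eval ((A γ).mulVec x) p := by
      intro γ x p
      have harg : (fun i => eval x (L γ i)) = (A γ).mulVec x := by
        funext i
        simp [hL, mulVec, dotProduct]
      rw [aux_eval_bind₁, harg]
    -- the evaluation map on invariant polynomials
    let Ψ : invariantRestrict θ (2 * d) →ₗ[ℝ] (↥T → ℝ) :=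
      { toFun := fun p t => eval (rep t) (p : MvPolynomial (Fin n) ℝ)
        map_add' := by intro p q; funext t; simp
        map_smul' := by intro c p; funext t; simp }
    have hΨapp : ∀ (p : invariantRestrict θ (2 * d)) (t : ↥T),
        Ψ p t = eval (rep t) (p : MvPolynomial (Fin n) ℝ) := fun p t => rfl
    have hΨinj : Function.Injective Ψ := by
      rw [← LinearMap.ker_eq_bot, eq_bot_iff]
      intro p hp
      rw [LinearMap.mem_ker] at hp
      have hinvp : ∀ (γ : Γ) (x : Fin n → ℝ),
          eval ((A γ).mulVec x) (p : MvPolynomial (Fin n) ℝ) = eval x (p : MvPolynomial (Fin n) ℝ) :=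
        p.2.2
      have hp0 : (p : MvPolynomial (Fin n) ℝ) = 0 := by
        apply hSuni _ p.2.1
        intro x hx
        have hot : orb x ∈ T := horbT x hx
        have h1 := congrFun hp (⟨orb x, hot⟩ : ↥T)
        rw [hΨapp] at h1
        have h2 := hrep_mem (⟨orb x, hot⟩ : ↥T)
        rw [hmem_orb] at h2
        obtain ⟨γ, hγ⟩ := h2
        rw [← hγ, hinvp γ x] at h1
        exact h1
      exact Submodule.mem_bot ℝ |>.mpr (Subtype.ext hp0)
    have hΨsurj : Function.Surjective Ψ := by
      intro g
      set f : ↥S → ℝ := fun s => g ⟨orb (s : Fin n → ℝ), horbT _ s.2⟩ with hf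
      obtain ⟨q, hq⟩ := hEsurj f
      have hqinv : ∀ (γ : Γ) (x : Fin n → ℝ),
          eval ((A γ).mulVec x) (q : MvPolynomial (Fin n) ℝ)
            = eval x (q : MvPolynomial (Fin n) ℝ) := by
        intro γ x
        have q'V : bind₁ (L γ) (q : MvPolynomial (Fin n) ℝ) ∈ V :=
          (mem_restrictTotalDegree _ _ _).mpr
            (le_trans (aux_totalDegree_bind₁_le _ (hLdeg γ) _)
              ((mem_restrictTotalDegree _ _ _).mp q.2))
        have hEq : E ⟨bind₁ (L γ) (q : MvPolynomial (Fin n) ℝ), q'V⟩ = E q := by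
          funext s
          rw [hEapp, hEapp]
          show eval (s : Fin n → ℝ) (bind₁ (L γ) (q : MvPolynomial (Fin n) ℝ)) = _
          rw [hcomp_eval]
          have hmemS : (A γ).mulVec (s : Fin n → ℝ) ∈ S := hSinv γ _ s.2
          have h1 := congrFun hq (⟨(A γ).mulVec (s : Fin n → ℝ), hmemS⟩ : ↥S)
          have h2 := congrFun hq s
          rw [hEapp] at h1 h2
          rw [h1, h2, hf]
          exact congrArg g (Subtype.ext (horb_smul γ (s : Fin n → ℝ)))
        have hqq : bind₁ (L γ) (q : MvPolynomial (Fin n) ℝ) = (q : MvPolynomial (Fin n) ℝ) :=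
          congrArg Subtype.val (hEinj hEq)
        calc eval ((A γ).mulVec x) (q : MvPolynomial (Fin n) ℝ)
            = eval x (bind₁ (L γ) (q : MvPolynomial (Fin n) ℝ)) := (hcomp_eval γ x _).symm
          _ = eval x (q : MvPolynomial (Fin n) ℝ) := by rw [hqq]
      have hqW : (q : MvPolynomial (Fin n) ℝ) ∈ invariantRestrict θ (2 * d) :=
        ⟨(mem_restrictTotalDegree _ _ _).mp q.2, hqinv⟩
      refine ⟨⟨(q : MvPolynomial (Fin n) ℝ), hqW⟩, ?_⟩
      funext t
      rw [hΨapp]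
      have h1 := congrFun hq (⟨rep t, hrepS t⟩ : ↥S)
      rw [hEapp] at h1
      show eval (rep t) (q : MvPolynomial (Fin n) ℝ) = g t
      rw [h1, hf]
      exact congrArg g (Subtype.ext (horb_rep t))
    have hfr : Module.finrank ℝ (invariantRestrict θ (2 * d)) = Module.finrank ℝ (↥T → ℝ) :=
      (LinearEquiv.ofBijective Ψ ⟨hΨinj, hΨsurj⟩).finrank_eq
    rw [hfr, Module.finrank_fintype_fun_eq_card, Fintype.card_coe]
end
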